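/- arXiv:1403.7724 — 2 statements merged into one kernel-verified Lean document; each statement's English description precedes it below -/
import Mathlib

section
/- Let Q be a finite-dimensional D-invariant subspace of ℝ[z_1,…,z_s] and let q_1,…,q_n be a basis of Q that is orthonormal with respect to the Bombieri bilinear form, i.e. (q_i,q_j) = δ_{ij}. Then every f ∈ Q satisfies f = Σ_{i=1}^n (q_i(D)f)(0)·q_i, and moreover f(x+y) = Σ_{i=1}^n (q_i(D)f)(y)·q_i(x) = Σ_{i=1}^n (q_i(D)f)(x)·q_i(y) for all x, y ∈ ℝ^s. -/
open MvPolynomial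

/-- The formal differential operator `∂^{|β|}/∂z^β` applied to a multivariate polynomial. -/
noncomputable def DOp {s : ℕ} (β : Fin s →₀ ℕ) (f : MvPolynomial (Fin s) ℝ) :
    MvPolynomial (Fin s) ℝ :=
  ∑ δ ∈ f.support,
    MvPolynomial.monomial (δ - β) (f.coeff δ * ∏ j, (Nat.descFactorial (δ j) (β j) : ℝ))

/-- `q(D) f`: the constant coefficient differential operator associated with `q`, applied
to `f`. -/
noncomputable def polyD {s : ℕ} (q f : MvPolynomial (Fin s) ℝ) : MvPolynomial (Fin s) ℝ :=
  ∑ β ∈ q.support, q.coeff β • DOp β f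

/-- A subspace `Q` is `D`-invariant if `q(D) p ∈ Q` for every `p ∈ Q` and every polynomial
`q`. -/
def DInvariant {s : ℕ} (Q : Submodule ℝ (MvPolynomial (Fin s) ℝ)) : Prop :=
  ∀ q : MvPolynomial (Fin s) ℝ, ∀ p ∈ Q, polyD q p ∈ Q

/-- The Bombieri (apolar) bilinear form `(f,g) = Σ_β β! f_β g_β`. -/
noncomputable def bombieri {s : ℕ} (f g : MvPolynomial (Fin s) ℝ) : ℝ :=
  ∑ β ∈ f.support ∪ g.support,
    (∏ j, (Nat.factorial (β j) : ℝ)) * f.coeff β * g.coeff β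

/-! The apolar pairing `(q_i(D) f)(0) = (q_i, f)` reads off the `i`-th coordinate of `f ∈ Q`
in the orthonormal basis. For the addition formula, apply this to the translate `f(· + y)`:
Taylor's formula in one variable at a time writes it as a combination of the derivatives
`D^β f`, so it lies in `Q` by `D`-invariance, and translation commutes with `q_i(D)`, so
`(q_i(D) f(· + y))(0) = (q_i(D) f)(y)`. -/

lemma eq_sum_smul_of_mem_span {ι R M : Type*} [Fintype ι] [DecidableEq ι] [Semiring R]
    [AddCommMonoid M] [Module R M] (v : ι → M) (φ : ι → M →ₗ[R] R)
    (hφ : ∀ i j, φ i (v j) = if i = j then 1 else 0) {f : M}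
    (hf : f ∈ Submodule.span R (Set.range v)) :
    f = ∑ i, φ i f • v i := by
  obtain ⟨c, rfl⟩ := (Submodule.mem_span_range_iff_exists_fun R).1 hf
  simp [map_sum, hφ]

noncomputable def shift {σ R : Type*} [CommSemiring R] (y : σ → R) :
    MvPolynomial σ R →ₐ[R] MvPolynomial σ R :=
  aeval fun i => X i + C (y i)

lemma shift_add {σ R : Type*} [CommSemiring R] (y z : σ → R) :
    shift (y + z) = (shift y).comp (shift z) := by
  refine algHom_ext fun i => ?_
  simp [shift, add_assoc]

lemma shift_zero {σ R : Type*} [CommSemiring R] : shift (0 : σ → R) = AlgHom.id R _ :=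
  algHom_ext fun i => by simp [shift]

lemma eval_shift {σ R : Type*} [CommSemiring R] (x y : σ → R) (f : MvPolynomial σ R) :
    eval x (shift y f) = eval (x + y) f := by
  change aeval x (shift y f) = aeval (x + y) f
  rw [← AlgHom.comp_apply, shift, comp_aeval]
  congr 2
  ext i
  simp

section

variable {s : ℕ}

lemma coeff_DOp (β α : Fin s →₀ ℕ) (f : MvPolynomial (Fin s) ℝ) :
    coeff α (DOp β f)
      = f.coeff (α + β) * ∏ j, (((α + β) j).descFactorial (β j) : ℝ) := by
  rw [DOp, coeff_sum, Finset.sum_eq_single (α + β)]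
  · simp
  · intro δ _ hδ
    rw [coeff_monomial]
    split_ifs with h
    · obtain ⟨j, hj⟩ : ∃ j, δ j < β j := by
        by_contra! hle
        exact hδ (Finsupp.ext fun j => by simp [← h, tsub_add_cancel_of_le (hle j)])
      rw [Finset.prod_eq_zero (Finset.mem_univ j), mul_zero]
      exact_mod_cast Nat.descFactorial_eq_zero_iff_lt.2 hj
    · rfl
  · simp +contextual

noncomputable def DOpₗ (β : Fin s →₀ ℕ) :
    MvPolynomial (Fin s) ℝ →ₗ[ℝ] MvPolynomial (Fin s) ℝ where
  toFun := DOp β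
  map_add' f g := by ext α; simp [coeff_DOp, add_mul]
  map_smul' c f := by ext α; simp [coeff_DOp, mul_assoc]

lemma DOpₗ_apply (β : Fin s →₀ ℕ) (f : MvPolynomial (Fin s) ℝ) :
    DOpₗ β f = DOp β f := rfl

lemma DOp_DOp (β γ : Fin s →₀ ℕ) (f : MvPolynomial (Fin s) ℝ) :
    DOp β (DOp γ f) = DOp (β + γ) f := by
  ext α
  rw [coeff_DOp, coeff_DOp, coeff_DOp, ← add_assoc, mul_assoc, ← Finset.prod_mul_distrib]
  congr 1
  refine Finset.prod_congr rfl fun j _ => ?_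
  have h :=
    Nat.descFactorial_mul_descFactorial (n := (α + β + γ) j) (Nat.le_add_left (γ j) (β j))
  simp only [Finsupp.add_apply, Nat.add_sub_cancel] at h ⊢
  rw [mul_comm]
  exact_mod_cast h

lemma DOp_comm (β γ : Fin s →₀ ℕ) (f : MvPolynomial (Fin s) ℝ) :
    DOp β (DOp γ f) = DOp γ (DOp β f) := by
  rw [DOp_DOp, DOp_DOp, add_comm]

lemma DOp_monomial (β δ : Fin s →₀ ℕ) (c : ℝ) :
    DOp β (monomial δ c)
      = monomial (δ - β) (c * ∏ j, ((δ j).descFactorial (β j) : ℝ)) := by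
  by_cases hc : c = 0
  · simp [hc, DOp]
  · rw [DOp, support_monomial, if_neg hc, Finset.sum_singleton, coeff_monomial, if_pos rfl]

lemma degreeOf_DOp_le (j : Fin s) (β : Fin s →₀ ℕ) (f : MvPolynomial (Fin s) ℝ) :
    degreeOf j (DOp β f) ≤ degreeOf j f := by
  refine degreeOf_le_iff.2 fun δ hδ => ?_
  have hδβ : δ + β ∈ f.support := by
    rw [mem_support_iff, coeff_DOp] at hδ
    exact mem_support_iff.2 (left_ne_zero_of_mul hδ)
  exact (Nat.le_add_right _ _).trans (monomial_le_degreeOf j hδβ)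

lemma polyD_monomial_one (β : Fin s →₀ ℕ) (f : MvPolynomial (Fin s) ℝ) :
    polyD (monomial β 1) f = DOp β f := by
  simp [polyD, support_monomial]

lemma DInvariant.DOp_mem {Q : Submodule ℝ (MvPolynomial (Fin s) ℝ)} (hQ : DInvariant Q)
    (β : Fin s →₀ ℕ) {f : MvPolynomial (Fin s) ℝ} (hf : f ∈ Q) : DOp β f ∈ Q :=
  polyD_monomial_one β f ▸ hQ _ f hf

lemma eval_zero_DOp (β : Fin s →₀ ℕ) (f : MvPolynomial (Fin s) ℝ) :
    eval 0 (DOp β f) = (∏ j, ((β j).factorial : ℝ)) * coeff β f := by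
  simp [eval_zero, constantCoeff_eq, coeff_DOp, Nat.descFactorial_self, mul_comm]

lemma eval_zero_polyD (g f : MvPolynomial (Fin s) ℝ) :
    eval 0 (polyD g f) = bombieri g f := by
  rw [polyD, bombieri, map_sum, ← Finset.sum_subset Finset.subset_union_left]
  · refine Finset.sum_congr rfl fun β _ => ?_
    rw [smul_eq_C_mul, map_mul, eval_C, eval_zero_DOp]
    ring
  · intro β _ hβ
    rw [notMem_support_iff.1 hβ]
    ring

noncomputable def polyDₗ (q : MvPolynomial (Fin s) ℝ) :
    MvPolynomial (Fin s) ℝ →ₗ[ℝ] MvPolynomial (Fin s) ℝ :=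
  ∑ β ∈ q.support, q.coeff β • DOpₗ β

lemma polyDₗ_apply (q f : MvPolynomial (Fin s) ℝ) : polyDₗ q f = polyD q f := by
  simp [polyDₗ, polyD, LinearMap.sum_apply, DOpₗ_apply]

lemma DOp_single_monomial (j : Fin s) (k : ℕ) (δ : Fin s →₀ ℕ) (c : ℝ) :
    DOp (Finsupp.single j k) (monomial δ c)
      = monomial (δ - Finsupp.single j k) (c * (δ j).descFactorial k) := by
  rw [DOp_monomial, Fintype.prod_eq_single j fun i hi => by simp [hi]]
  simp

lemma shift_single_monomial (j : Fin s) (t : ℝ) (δ : Fin s →₀ ℕ) (c : ℝ) {N : ℕ}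
    (hN : δ j < N) :
    shift (Pi.single j t) (monomial δ c)
      = ∑ k ∈ Finset.range N,
          (t ^ k / k.factorial) • DOp (Finsupp.single j k) (monomial δ c) := by
  obtain ⟨δ', m, hδ'j, rfl⟩ : ∃ δ' m, δ' j = 0 ∧ δ = δ' + Finsupp.single j m :=
    ⟨_, _, Finsupp.erase_same, (Finsupp.erase_add_single j δ).symm⟩
  have hfix : shift (Pi.single j t) (monomial δ' c) = monomial δ' c := by
    rw [shift, aeval_monomial, monomial_eq, algebraMap_eq]
    congr 1
    refine Finsupp.prod_congr fun i hi => ?_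
    have hij : i ≠ j := by rintro rfl; exact Finsupp.mem_support_iff.1 hi hδ'j
    rw [Pi.single_eq_of_ne hij, C_0, add_zero]
  have hsub (k : ℕ) :
      δ' + Finsupp.single j m - Finsupp.single j k = δ' + Finsupp.single j (m - k) := by
    ext i
    by_cases hi : i = j <;> simp [hi, hδ'j]
  simp only [Finsupp.add_apply, hδ'j, Finsupp.single_eq_same, zero_add] at hN
  calc shift (Pi.single j t) (monomial (δ' + Finsupp.single j m) c)
      = monomial δ' c * (C t + X j) ^ m := by
        rw [← mul_one c, ← monomial_mul, map_mul, hfix, mul_one, ← X_pow_eq_monomial, map_pow,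
          shift, aeval_X, Pi.single_eq_same, add_comm]
    _ = ∑ k ∈ Finset.range (m + 1), (t ^ k / k.factorial) •
          DOp (Finsupp.single j k) (monomial (δ' + Finsupp.single j m) c) := by
        rw [add_pow, Finset.mul_sum]
        refine Finset.sum_congr rfl fun k hk => ?_
        have hcoef :
            t ^ k / k.factorial * (c * (m.descFactorial k : ℝ)) = c * (t ^ k * m.choose k) := by
          rw [Nat.descFactorial_eq_factorial_mul_choose]
          push_cast
          field_simp
        rw [DOp_single_monomial, hsub, smul_monomial, smul_eq_mul, Finsupp.add_apply, hδ'j,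
          Finsupp.single_eq_same, zero_add, hcoef, ← monomial_mul, X_pow_eq_monomial, ← map_pow,
          C_mul_monomial, ← map_natCast C, mul_comm _ (C _), C_mul_monomial, mul_one,
          mul_comm (m.choose k : ℝ), mul_comm]
    _ = _ := by
        refine Finset.sum_subset (Finset.range_subset_range.2 hN) fun k _ hk => ?_
        rw [DOp_single_monomial, Nat.descFactorial_eq_zero_iff_lt.2 (by simpa [hδ'j] using hk)]
        simp

lemma shift_single_eq_sum (j : Fin s) (t : ℝ) (f : MvPolynomial (Fin s) ℝ) {N : ℕ}
    (hN : degreeOf j f < N) :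
    shift (Pi.single j t) f
      = ∑ k ∈ Finset.range N, (t ^ k / k.factorial) • DOp (Finsupp.single j k) f := by
  have hδ : ∀ δ ∈ f.support, δ j < N := (degreeOf_lt_iff (Nat.zero_lt_of_lt hN)).1 hN
  calc shift (Pi.single j t) f
      = ∑ δ ∈ f.support, shift (Pi.single j t) (monomial δ (coeff δ f)) := by
        conv_lhs => rw [f.as_sum]
        exact map_sum _ _ _
    _ = ∑ k ∈ Finset.range N, (t ^ k / k.factorial) •
          DOpₗ (Finsupp.single j k) (∑ δ ∈ f.support, monomial δ (coeff δ f)) := by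
        simp only [map_sum, Finset.smul_sum]
        rw [Finset.sum_comm]
        exact Finset.sum_congr rfl fun δ hδf => shift_single_monomial j t δ _ (hδ δ hδf)
    _ = _ := by simp only [← f.as_sum, DOpₗ_apply]

lemma DOp_shift (β : Fin s →₀ ℕ) (y : Fin s → ℝ) (f : MvPolynomial (Fin s) ℝ) :
    DOp β (shift y f) = shift y (DOp β f) := by
  induction y using Pi.single_induction generalizing f with
  | zero => simp [shift_zero]
  | add y z hy hz => simp only [shift_add, AlgHom.comp_apply, hy, hz]
  | single j t =>
    rw [shift_single_eq_sum j t f (Nat.lt_succ_self _),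
      shift_single_eq_sum j t (DOp β f) (Nat.lt_succ_of_le (degreeOf_DOp_le j β f))]
    change DOpₗ β _ = _
    simp only [map_sum, map_smul]
    exact Finset.sum_congr rfl fun k _ => by rw [DOpₗ_apply, DOp_comm]

lemma polyD_shift (g : MvPolynomial (Fin s) ℝ) (y : Fin s → ℝ)
    (f : MvPolynomial (Fin s) ℝ) : polyD g (shift y f) = shift y (polyD g f) := by
  simp only [polyD, map_sum, map_smul, DOp_shift]

lemma DInvariant.shift_mem {Q : Submodule ℝ (MvPolynomial (Fin s) ℝ)} (hQ : DInvariant Q)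
    (y : Fin s → ℝ) {f : MvPolynomial (Fin s) ℝ} (hf : f ∈ Q) : shift y f ∈ Q := by
  induction y using Pi.single_induction generalizing f with
  | zero => simpa [shift_zero] using hf
  | add y z hy hz =>
    rw [shift_add, AlgHom.comp_apply]
    exact hy (hz hf)
  | single j t =>
    rw [shift_single_eq_sum j t f (Nat.lt_succ_self _)]
    exact Submodule.sum_mem _ fun k _ => Q.smul_mem _ (hQ.DOp_mem _ hf)

lemma eq_sum_eval_zero_polyD_smul {n : ℕ} (q : Fin n → MvPolynomial (Fin s) ℝ)
    (horth : ∀ i j, bombieri (q i) (q j) = if i = j then 1 else 0) {f : MvPolynomial (Fin s) ℝ}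
    (hf : f ∈ Submodule.span ℝ (Set.range q)) :
    f = ∑ i, eval 0 (polyD (q i) f) • q i := by
  have haeval (p : MvPolynomial (Fin s) ℝ) : aeval 0 p = eval 0 p := rfl
  simpa only [LinearMap.comp_apply, polyDₗ_apply, AlgHom.toLinearMap_apply, haeval]
    using eq_sum_smul_of_mem_span q (fun i => (aeval 0).toLinearMap ∘ₗ polyDₗ (q i))
      (fun i j => by
        rw [LinearMap.comp_apply, polyDₗ_apply, AlgHom.toLinearMap_apply, haeval,
          eval_zero_polyD, horth]) hf

lemma eval_add_eq_sum {n : ℕ} {Q : Submodule ℝ (MvPolynomial (Fin s) ℝ)} (hQ : DInvariant Q)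
    (q : Fin n → MvPolynomial (Fin s) ℝ) (hspan : Submodule.span ℝ (Set.range q) = Q)
    (horth : ∀ i j, bombieri (q i) (q j) = if i = j then 1 else 0) {f : MvPolynomial (Fin s) ℝ}
    (hf : f ∈ Q) (x y : Fin s → ℝ) :
    eval (x + y) f = ∑ i, eval y (polyD (q i) f) * eval x (q i) := by
  have hexp := eq_sum_eval_zero_polyD_smul q horth (hspan ▸ hQ.shift_mem y hf)
  calc eval (x + y) f = eval x (shift y f) := (eval_shift x y f).symm
    _ = eval x (∑ i, eval 0 (polyD (q i) (shift y f)) • q i) := congrArg (eval x) hexp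
    _ = _ := by simp only [map_sum, smul_eval, polyD_shift, eval_shift, zero_add]

end

theorem stmt3_general {s n : ℕ} (Q : Submodule ℝ (MvPolynomial (Fin s) ℝ))
    (hQ : DInvariant Q) (q : Fin n → MvPolynomial (Fin s) ℝ)
    (hspan : Submodule.span ℝ (Set.range q) = Q)
    (horth : ∀ i j, bombieri (q i) (q j) = if i = j then 1 else 0) :
    ∀ f ∈ Q,
      (f = ∑ i, MvPolynomial.eval (0 : Fin s → ℝ) (polyD (q i) f) • q i) ∧
      ∀ x y : Fin s → ℝ,
        (MvPolynomial.eval (x + y) f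
          = ∑ i, MvPolynomial.eval y (polyD (q i) f) * MvPolynomial.eval x (q i)) ∧
        (MvPolynomial.eval (x + y) f
          = ∑ i, MvPolynomial.eval x (polyD (q i) f) * MvPolynomial.eval y (q i)) := by
  intro f hf
  refine ⟨eq_sum_eval_zero_polyD_smul q horth (hspan ▸ hf), fun x y => ⟨?_, ?_⟩⟩
  · exact eval_add_eq_sum hQ q hspan horth hf x y
  · rw [add_comm]
    exact eval_add_eq_sum hQ q hspan horth hf y x

/-- if `q_1,…,q_n` is a Bombieri-orthonormal basis of a finite-dimensional
`D`-invariant subspace `Q`, then every `f ∈ Q` satisfies `f = Σ_i (q_i(D)f)(0)·q_i` and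
`f(x+y) = Σ_i (q_i(D)f)(y)·q_i(x) = Σ_i (q_i(D)f)(x)·q_i(y)`. -/
theorem stmt3 {s n : ℕ} (Q : Submodule ℝ (MvPolynomial (Fin s) ℝ))
    (hQ : DInvariant Q) (q : Fin n → MvPolynomial (Fin s) ℝ)
    (hind : LinearIndependent ℝ q)
    (hspan : Submodule.span ℝ (Set.range q) = Q)
    (horth : ∀ i j, bombieri (q i) (q j) = if i = j then 1 else 0) :
    ∀ f ∈ Q,
      (f = ∑ i, MvPolynomial.eval (0 : Fin s → ℝ) (polyD (q i) f) • q i) ∧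
      ∀ x y : Fin s → ℝ,
        (MvPolynomial.eval (x + y) f
          = ∑ i, MvPolynomial.eval y (polyD (q i) f) * MvPolynomial.eval x (q i)) ∧
        (MvPolynomial.eval (x + y) f
          = ∑ i, MvPolynomial.eval x (polyD (q i) f) * MvPolynomial.eval y (q i)) :=
  stmt3_general Q hQ q hspan horth
end

section
/- Let f(z) = Σ_{α∈ℤ^s} c_α z^α be a finite Laurent sum (c finitely supported), let Ξ ∈ ℤ^{s×s} be invertible, k ∈ ℕ, and z₀ ∈ (ℂ∖{0})^s. Define g(z) := f(z^Ξ) on (ℂ∖{0})^s. Then all partial derivatives of g of total order ≤ k vanish at z₀ if and only if all partial derivatives of f of total order ≤ k vanish at z₀^Ξ. -/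
open scoped Matrix

/-- The set `E_Ξ = Ξ[0,1)^s ∩ ℤ^s` of coset representatives of `ℤ^s / Ξℤ^s`. -/
def EXi {s : ℕ} (Ξ : Matrix (Fin s) (Fin s) ℤ) : Set (Fin s → ℤ) :=
  {ξ | ∃ t : Fin s → ℝ, (∀ j, 0 ≤ t j ∧ t j < 1) ∧
    (fun j => (ξ j : ℝ)) = (Ξ.map (Int.cast : ℤ → ℝ)).mulVec t}

/-- A matrix `Ξ ∈ ℤ^{s×s}` is expanding if all its complex eigenvalues have modulus
greater than one. -/
def Expanding {s : ℕ} (Ξ : Matrix (Fin s) (Fin s) ℤ) : Prop :=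
  ∀ μ : ℂ, (Matrix.charpoly (Ξ.map (Int.cast : ℤ → ℂ))).IsRoot μ → 1 < ‖μ‖

/-- The subdivision operator `(S_a c)(α) = Σ_β a(α − Ξβ) c(β)`. -/
noncomputable def subdiv {s : ℕ} (Ξ : Matrix (Fin s) (Fin s) ℤ)
    (a : (Fin s → ℤ) →₀ ℂ) (c : (Fin s → ℤ) → ℂ) (α : Fin s → ℤ) : ℂ :=
  ∑ᶠ β : Fin s → ℤ, a (α - Ξ.mulVec β) * c β

/-- Convolution `(h*c)(α) = Σ_β h(β) c(α−β)` for a (finitely supported) sequence `h`. -/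
noncomputable def convF {s : ℕ} (h c : (Fin s → ℤ) → ℂ) (α : Fin s → ℤ) : ℂ :=
  ∑ᶠ β : Fin s → ℤ, h β * c (α - β)

/-- `z^Ξ = (z^{ξ_1},…,z^{ξ_s})`, `ξ_j` the columns of `Ξ`. -/
noncomputable def powXi {s : ℕ} (Ξ : Matrix (Fin s) (Fin s) ℤ) (z : Fin s → ℂ) :
    Fin s → ℂ :=
  fun j => ∏ i, z i ^ Ξ i j

/-- The vector `e^{−2πiΞ^{−T}ξ'}`. -/
noncomputable def rootvec {s : ℕ} (Ξ : Matrix (Fin s) (Fin s) ℤ) (ξ' : Fin s → ℤ) :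
    Fin s → ℂ :=
  fun j => Complex.exp (-2 * (Real.pi : ℂ) * Complex.I *
    ((((Ξ.map (Int.cast : ℤ → ℝ)).transpose⁻¹.mulVec fun i => (ξ' i : ℝ)) j : ℝ)))

/-- The symbol `a*(z) = Σ_α a(α) z^α` as a function on `(ℂ∖{0})^s`. -/
noncomputable def astar {s : ℕ} (a : (Fin s → ℤ) →₀ ℂ) (z : Fin s → ℂ) : ℂ :=
  a.sum fun α v => v * ∏ j, z j ^ α j

/-- The subsymbol `a_ξ*(z) = Σ_γ a(ξ + Ξγ) z^γ` as a function on `(ℂ∖{0})^s`. -/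
noncomputable def asubF {s : ℕ} (Ξ : Matrix (Fin s) (Fin s) ℤ)
    (a : (Fin s → ℤ) →₀ ℂ) (ξ : Fin s → ℤ) (z : Fin s → ℂ) : ℂ :=
  ∑ᶠ γ : Fin s → ℤ, a (ξ + Ξ.mulVec γ) * ∏ j, z j ^ γ j

/-- The exponential sequence `e_θ(α) = θ^α`. -/
noncomputable def eSeq {s : ℕ} (θ : Fin s → ℂ) (α : Fin s → ℤ) : ℂ :=
  ∏ j, θ j ^ α j

/-- The partial derivative `∂/∂z_j` of a function `(Fin s → ℂ) → ℂ`. -/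
noncomputable def pd {s : ℕ} (j : Fin s) (f : (Fin s → ℂ) → ℂ) : (Fin s → ℂ) → ℂ :=
  fun z => fderiv ℂ f z (Pi.single j 1)

/-- The iterated partial derivative `∂^{|β|}/∂z^β` of a function `(Fin s → ℂ) → ℂ`. -/
noncomputable def pdMulti {s : ℕ} (β : Fin s → ℕ) (f : (Fin s → ℂ) → ℂ) :
    (Fin s → ℂ) → ℂ :=
  (List.ofFn fun j => (pd j)^[β j]).foldr (· ∘ ·) id f

/-! On the torus `(ℂ∖{0})^s` one has `∂^β z^α = (α)_β z^(α-β)`, where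
`(α)_β = ∏ⱼ αⱼ(αⱼ-1)⋯(αⱼ-βⱼ+1)` is the multivariate falling factorial. So for `w` on the torus,
`∂^β f(w) = 0` says exactly that the functional `T P = Σ_α c_α w^α P(α)` kills the polynomial
`(X)_β`. The falling factorials with `|β| ≤ k` span all polynomials of total degree `≤ k`, so the
derivatives of `f` of order `≤ k` vanish at `w` iff `T` kills every polynomial of degree `≤ k`.

For `g(z) = f(z^Ξ) = Σ_α c_α z^(Ξα)` and `w = z₀^Ξ` we have `z₀^(Ξα) = w^α`, so the same argument
turns the condition on `g` into: `T` kills `P ∘ Ξ` for every `P` of degree `≤ k`. Since `Ξ` is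
invertible over `ℂ`, `P ↦ P ∘ Ξ` is a bijection of the polynomials of degree `≤ k`. -/

open MvPolynomial

theorem zpow_sum₀ {G₀ ι : Type*} [CommGroupWithZero G₀] {a : G₀} (ha : a ≠ 0) (A : Finset ι)
    (f : ι → ℤ) : a ^ (∑ i ∈ A, f i) = ∏ i ∈ A, a ^ f i := by
  classical
  induction A using Finset.induction_on with
  | empty => simp
  | insert i A hi ih => rw [Finset.sum_insert hi, Finset.prod_insert hi, zpow_add₀ ha, ih]

namespace MvPolynomial

variable {σ R : Type*} [CommRing R]

noncomputable def mvDescPochhammer [Fintype σ] (β : σ → ℕ) : MvPolynomial σ R :=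
  ∏ i, (descPochhammer R (β i)).toMvPolynomial i

theorem eval_mvDescPochhammer [Fintype σ] (β : σ → ℕ) (x : σ → R) :
    eval x (mvDescPochhammer β) = ∏ i, (descPochhammer R (β i)).eval (x i) := by
  simp [mvDescPochhammer]

theorem mvDescPochhammer_add_single [Fintype σ] [DecidableEq σ] (β : σ → ℕ) (j : σ) :
    mvDescPochhammer (β + Pi.single j 1 : σ → ℕ) =
      mvDescPochhammer β * (X j - (β j : MvPolynomial σ R)) := by
  have hfactor : ∀ i, (descPochhammer R ((β + Pi.single j 1 : σ → ℕ) i)).toMvPolynomial i =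
      (descPochhammer R (β i)).toMvPolynomial i *
        if i = j then X j - (β j : MvPolynomial σ R) else 1 := by
    intro i
    by_cases hij : i = j
    · subst hij
      simp [descPochhammer_succ_right]
    · simp [hij]
  rw [mvDescPochhammer, Fintype.prod_congr _ _ hfactor, Finset.prod_mul_distrib,
    Finset.prod_ite_eq']
  simp [mvDescPochhammer]

theorem X_mul_mvDescPochhammer [Fintype σ] [DecidableEq σ] (β : σ → ℕ) (j : σ) :
    (X j : MvPolynomial σ R) * mvDescPochhammer β =
      mvDescPochhammer (β + Pi.single j 1 : σ → ℕ) + (β j : R) • mvDescPochhammer β := by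
  rw [mvDescPochhammer_add_single, smul_eq_C_mul, map_natCast]
  ring

theorem totalDegree_toMvPolynomial_descPochhammer_le (n : ℕ) (i : σ) :
    ((descPochhammer R n).toMvPolynomial i).totalDegree ≤ n := by
  induction n with
  | zero => simp
  | succ n ih =>
    rw [descPochhammer_succ_right, map_mul, map_sub, Polynomial.toMvPolynomial_X, map_natCast,
      ← map_natCast C]
    refine (totalDegree_mul _ _).trans (add_le_add ih ?_)
    exact (totalDegree_sub_C_le _ _).trans ((totalDegree_monomial_le _ _).trans (by simp))

theorem totalDegree_mvDescPochhammer_le [Fintype σ] (β : σ → ℕ) :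
    (mvDescPochhammer β : MvPolynomial σ R).totalDegree ≤ ∑ i, β i :=
  (totalDegree_finsetProd _ _).trans
    (Finset.sum_le_sum fun i _ => totalDegree_toMvPolynomial_descPochhammer_le (β i) i)

theorem totalDegree_bind₁_le {τ : Type*} {f : σ → MvPolynomial τ R}
    (hf : ∀ i, (f i).totalDegree ≤ 1) (P : MvPolynomial σ R) :
    (bind₁ f P).totalDegree ≤ P.totalDegree := by
  conv_lhs => rw [P.as_sum]
  rw [map_sum]
  refine (totalDegree_finsetSum _ _).trans (Finset.sup_le fun m hm => ?_)
  rw [bind₁_monomial]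
  refine ((totalDegree_mul _ _).trans ?_).trans (le_totalDegree hm)
  rw [totalDegree_C, zero_add]
  refine (totalDegree_finsetProd _ _).trans (Finset.sum_le_sum fun i _ => ?_)
  exact (totalDegree_pow _ _).trans (mul_le_of_le_one_right' (hf i))

section FallingFactorialSpan

variable [Fintype σ]

variable (σ R) in
noncomputable def mvDescPochhammerSpan (k : ℕ) : Submodule R (MvPolynomial σ R) :=
  Submodule.span R (mvDescPochhammer '' {β : σ → ℕ | ∑ i, β i ≤ k})

theorem mvDescPochhammerSpan_mono {k m : ℕ} (h : k ≤ m) :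
    mvDescPochhammerSpan σ R k ≤ mvDescPochhammerSpan σ R m :=
  Submodule.span_mono (Set.image_mono fun _ hβ => le_trans hβ h)

theorem X_mul_mem_mvDescPochhammerSpan {k : ℕ} {p : MvPolynomial σ R}
    (hp : p ∈ mvDescPochhammerSpan σ R k) (j : σ) :
    X j * p ∈ mvDescPochhammerSpan σ R (k + 1) := by
  classical
  suffices mvDescPochhammerSpan σ R k ≤
      (mvDescPochhammerSpan σ R (k + 1)).comap (LinearMap.mulLeft R (X j)) from this hp
  refine Submodule.span_le.2 ?_
  rintro _ ⟨β, hβ, rfl⟩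
  have hβj : ∑ i, (β + Pi.single j 1 : σ → ℕ) i ≤ k + 1 := by
    simpa [Finset.sum_add_distrib] using hβ
  have hβ' : mvDescPochhammer β ∈ mvDescPochhammerSpan σ R (k + 1) :=
    mvDescPochhammerSpan_mono k.le_succ (Submodule.subset_span ⟨β, hβ, rfl⟩)
  simp only [SetLike.mem_coe, Submodule.mem_comap, LinearMap.mulLeft_apply]
  rw [X_mul_mvDescPochhammer]
  exact add_mem (Submodule.subset_span ⟨_, hβj, rfl⟩) (Submodule.smul_mem _ _ hβ')

theorem X_pow_mul_mem_mvDescPochhammerSpan {k : ℕ} {p : MvPolynomial σ R}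
    (hp : p ∈ mvDescPochhammerSpan σ R k) (j : σ) (n : ℕ) :
    X j ^ n * p ∈ mvDescPochhammerSpan σ R (n + k) := by
  induction n with
  | zero => simpa using hp
  | succ n ih =>
    rw [pow_succ', mul_assoc, add_right_comm]
    exact X_mul_mem_mvDescPochhammerSpan ih j

theorem monomial_one_mem_mvDescPochhammerSpan (m : σ →₀ ℕ) :
    monomial m (1 : R) ∈ mvDescPochhammerSpan σ R (m.sum fun _ e => e) := by
  induction m using Finsupp.induction with
  | zero => exact Submodule.subset_span ⟨0, by simp, by simp [mvDescPochhammer]⟩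
  | single_add i n m _ _ ih =>
    rw [monomial_single_add, Finsupp.sum_add_index' (fun _ => rfl) (fun _ _ _ => rfl),
      Finsupp.sum_single_index rfl]
    exact X_pow_mul_mem_mvDescPochhammerSpan ih i n

theorem restrictTotalDegree_le_mvDescPochhammerSpan (k : ℕ) :
    restrictTotalDegree σ R k ≤ mvDescPochhammerSpan σ R k := by
  intro P hP
  rw [mem_restrictTotalDegree] at hP
  rw [P.as_sum]
  refine Submodule.sum_mem _ fun m hm => ?_
  rw [← mul_one (coeff m P), ← smul_eq_mul, ← smul_monomial]
  exact Submodule.smul_mem _ _ (mvDescPochhammerSpan_mono ((le_totalDegree hm).trans hP)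
    (monomial_one_mem_mvDescPochhammerSpan m))

theorem forall_mvDescPochhammer_eq_zero_iff {M : Type*} [AddCommGroup M] [Module R M]
    (T : MvPolynomial σ R →ₗ[R] M) (k : ℕ) :
    (∀ β : σ → ℕ, ∑ i, β i ≤ k → T (mvDescPochhammer β) = 0) ↔
      ∀ P : MvPolynomial σ R, P.totalDegree ≤ k → T P = 0 := by
  refine ⟨fun h P hP => ?_, fun h β hβ => h _ ((totalDegree_mvDescPochhammer_le β).trans hβ)⟩
  have hspan : mvDescPochhammerSpan σ R k ≤ LinearMap.ker T := by
    refine Submodule.span_le.2 ?_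
    rintro _ ⟨β, hβ, rfl⟩
    exact h β hβ
  exact hspan (restrictTotalDegree_le_mvDescPochhammerSpan k ((mem_restrictTotalDegree _ _ _).2 hP))

end FallingFactorialSpan

noncomputable def weightedEval {ι : Type*} (A : Finset ι) (w : ι → R) (p : ι → σ → R) :
    MvPolynomial σ R →ₗ[R] R :=
  ∑ x ∈ A, w x • (aeval (p x)).toLinearMap

theorem weightedEval_apply {ι : Type*} (A : Finset ι) (w : ι → R) (p : ι → σ → R)
    (P : MvPolynomial σ R) : weightedEval A w p P = ∑ x ∈ A, w x * eval (p x) P := by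
  simp [weightedEval, aeval_eq_eval]

section LinearSubstitution

variable [Fintype σ]

theorem bind₁_toMvPolynomial_bind₁_toMvPolynomial (A B : Matrix σ σ R) (P : MvPolynomial σ R) :
    bind₁ B.toMvPolynomial (bind₁ A.toMvPolynomial P) = bind₁ (A * B).toMvPolynomial P := by
  rw [bind₁_bind₁]
  congr 1
  ext1 i
  rw [bind₁_X_right, bind₁_X_right, Matrix.toMvPolynomial_mul]

theorem eval_bind₁_toMvPolynomial (A : Matrix σ σ R) (x : σ → R) (P : MvPolynomial σ R) :
    eval x (bind₁ A.toMvPolynomial P) = eval (A *ᵥ x) P := by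
  rw [← aeval_eq_eval, ← aeval_eq_eval, aeval_bind₁]
  congr 2
  ext1 i
  exact Matrix.toMvPolynomial_eval_eq_apply A i x

theorem weightedEval_bind₁_toMvPolynomial {ι : Type*} (A : Finset ι) (w : ι → R)
    (p : ι → σ → R) (M : Matrix σ σ R) (P : MvPolynomial σ R) :
    weightedEval A w p (bind₁ M.toMvPolynomial P) = weightedEval A w (fun x => M *ᵥ p x) P := by
  simp only [weightedEval_apply, eval_bind₁_toMvPolynomial]

theorem forall_bind₁_toMvPolynomial_eq_zero_iff [DecidableEq σ] {M : Type*} [AddCommGroup M]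
    [Module R M] (T : MvPolynomial σ R →ₗ[R] M) {A : Matrix σ σ R} (hA : IsUnit A.det) (k : ℕ) :
    (∀ P : MvPolynomial σ R, P.totalDegree ≤ k → T (bind₁ A.toMvPolynomial P) = 0) ↔
      ∀ P : MvPolynomial σ R, P.totalDegree ≤ k → T P = 0 := by
  refine ⟨fun h P hP => ?_, fun h P hP =>
    h _ ((totalDegree_bind₁_le (Matrix.toMvPolynomial_totalDegree_le A) P).trans hP)⟩
  have hP' : bind₁ A.toMvPolynomial (bind₁ A⁻¹.toMvPolynomial P) = P := by
    rw [bind₁_toMvPolynomial_bind₁_toMvPolynomial, Matrix.nonsing_inv_mul A hA,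
      Matrix.toMvPolynomial_one, bind₁_X_left, AlgHom.id_apply]
  rw [← hP']
  exact h _ ((totalDegree_bind₁_le (Matrix.toMvPolynomial_totalDegree_le _) P).trans hP)

end LinearSubstitution

end MvPolynomial

def torus (s : ℕ) : Set (Fin s → ℂ) := {z | ∀ j, z j ≠ 0}

section Torus

variable {s : ℕ}

theorem isOpen_torus : IsOpen (torus s) := by
  simp only [torus, Set.ofPred_forall]
  exact isOpen_iInter_of_finite fun j => isOpen_ne_fun (continuous_apply j) continuous_const

theorem eSeq_ne_zero {z : Fin s → ℂ} (hz : z ∈ torus s) (α : Fin s → ℤ) : eSeq z α ≠ 0 :=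
  Finset.prod_ne_zero_iff.2 fun j _ => zpow_ne_zero _ (hz j)

theorem eSeq_add {z : Fin s → ℂ} (hz : z ∈ torus s) (α γ : Fin s → ℤ) :
    eSeq z (α + γ) = eSeq z α * eSeq z γ := by
  simp only [eSeq, Pi.add_apply, zpow_add₀ (hz _), Finset.prod_mul_distrib]

theorem eSeq_sub_single (z : Fin s → ℂ) (α : Fin s → ℤ) (i : Fin s) :
    eSeq z (α - Pi.single i 1) = z i ^ (α i - 1) * ∏ j ∈ Finset.univ.erase i, z j ^ α j := by
  rw [eSeq, ← Finset.mul_prod_erase _ _ (Finset.mem_univ i)]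
  congr 1
  · simp
  · refine Finset.prod_congr rfl fun j hj => ?_
    rw [Pi.sub_apply, Pi.single_eq_of_ne (Finset.ne_of_mem_erase hj), sub_zero]

theorem hasFDerivAt_eSeq {z : Fin s → ℂ} (hz : z ∈ torus s) (α : Fin s → ℤ) :
    HasFDerivAt (fun z => eSeq z α)
      (∑ i, (α i * eSeq z (α - Pi.single i 1)) •
        (ContinuousLinearMap.proj i : (Fin s → ℂ) →L[ℂ] ℂ)) z := by
  have hfactor : ∀ i, HasFDerivAt (fun z : Fin s → ℂ => z i ^ α i)
      ((α i * z i ^ (α i - 1)) • ContinuousLinearMap.proj i) z := fun i => by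
    exact (hasDerivAt_zpow (α i) (z i) (Or.inl (hz i))).comp_hasFDerivAt z
      (hasFDerivAt_apply i z : HasFDerivAt (fun f : Fin s → ℂ => f i)
        (ContinuousLinearMap.proj i : (Fin s → ℂ) →L[ℂ] ℂ) z)
  refine (HasFDerivAt.finsetProd (u := Finset.univ) fun i _ => hfactor i).congr_fderiv
    (Finset.sum_congr rfl fun i _ => ?_)
  rw [eSeq_sub_single, smul_smul]
  congr 1
  ring

theorem powXi_mem_torus (Ξ : Matrix (Fin s) (Fin s) ℤ) {z : Fin s → ℂ} (hz : z ∈ torus s) :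
    powXi Ξ z ∈ torus s :=
  fun _ => Finset.prod_ne_zero_iff.2 fun i _ => zpow_ne_zero _ (hz i)

theorem eSeq_powXi (Ξ : Matrix (Fin s) (Fin s) ℤ) {z : Fin s → ℂ} (hz : z ∈ torus s)
    (α : Fin s → ℤ) : eSeq (powXi Ξ z) α = eSeq z (Ξ *ᵥ α) := by
  simp only [eSeq, powXi, ← Finset.prod_zpow, ← zpow_mul]
  rw [Finset.prod_comm]
  refine Finset.prod_congr rfl fun i _ => ?_
  rw [← zpow_sum₀ (hz i)]
  rfl

end Torus

section LaurentSum

variable {s : ℕ} {ι : Type*}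

noncomputable def laurentSum (A : Finset ι) (d : ι → ℂ) (e : ι → Fin s → ℤ) (z : Fin s → ℂ) :
    ℂ :=
  ∑ x ∈ A, d x * eSeq z (e x)

theorem pd_laurentSum (A : Finset ι) (d : ι → ℂ) (e : ι → Fin s → ℤ) {z : Fin s → ℂ}
    (hz : z ∈ torus s) (j : Fin s) :
    pd j (laurentSum A d e) z =
      laurentSum A (fun x => d x * e x j) (fun x => e x - Pi.single j 1) z := by
  have h : HasFDerivAt (laurentSum A d e) (∑ x ∈ A, d x • ∑ i,
      (e x i * eSeq z (e x - Pi.single i 1)) •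
        (ContinuousLinearMap.proj i : (Fin s → ℂ) →L[ℂ] ℂ)) z :=
    HasFDerivAt.fun_sum fun x _ => (hasFDerivAt_eSeq hz (e x)).const_mul (d x)
  simp [pd, h.fderiv, laurentSum, Pi.single_apply, mul_assoc]

theorem pd_congr {F G : (Fin s → ℂ) → ℂ} (h : Set.EqOn F G (torus s)) (j : Fin s) :
    Set.EqOn (pd j F) (pd j G) (torus s) := fun z hz => by
  rw [pd, pd, (Filter.eventuallyEq_of_mem (isOpen_torus.mem_nhds hz) h).fderiv_eq]

theorem iterate_pd_congr {F G : (Fin s → ℂ) → ℂ} (h : Set.EqOn F G (torus s)) (j : Fin s)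
    (n : ℕ) : Set.EqOn ((pd j)^[n] F) ((pd j)^[n] G) (torus s) := by
  induction n with
  | zero => exact h
  | succ n ih =>
    simp only [Function.iterate_succ_apply']
    exact pd_congr ih j

theorem iterate_pd_laurentSum (A : Finset ι) (d : ι → ℂ) (e : ι → Fin s → ℤ) (j : Fin s)
    (n : ℕ) :
    Set.EqOn ((pd j)^[n] (laurentSum A d e))
      (laurentSum A (fun x => d x * (descPochhammer ℂ n).eval (e x j : ℂ))
        (fun x => e x - Pi.single j (n : ℤ))) (torus s) := by
  induction n with
  | zero => intro z _; simp
  | succ n ih =>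
    intro z hz
    rw [Function.iterate_succ_apply', pd_congr ih j hz, pd_laurentSum _ _ _ hz]
    simp [laurentSum, descPochhammer_succ_right, sub_sub, ← Pi.single_add, mul_assoc]

noncomputable def pdList (β : Fin s → ℕ) (l : List (Fin s)) (F : (Fin s → ℂ) → ℂ) :
    (Fin s → ℂ) → ℂ :=
  (l.map fun j => (pd j)^[β j]).foldr (· ∘ ·) id F

theorem pdMulti_eq_pdList (β : Fin s → ℕ) (F : (Fin s → ℂ) → ℂ) :
    pdMulti β F = pdList β (List.finRange s) F := by
  rw [pdMulti, pdList, List.ofFn_eq_map]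

theorem pdList_congr {F G : (Fin s → ℂ) → ℂ} (h : Set.EqOn F G (torus s)) (β : Fin s → ℕ)
    (l : List (Fin s)) : Set.EqOn (pdList β l F) (pdList β l G) (torus s) := by
  induction l with
  | nil => exact h
  | cons j l ih => exact iterate_pd_congr ih j (β j)

theorem pdMulti_congr {F G : (Fin s → ℂ) → ℂ} (h : Set.EqOn F G (torus s)) (β : Fin s → ℕ) :
    Set.EqOn (pdMulti β F) (pdMulti β G) (torus s) := by
  simpa only [pdMulti_eq_pdList] using pdList_congr h β (List.finRange s)

-- The indices in `l` are distinct, so `(pd j)^[β j]` still sees the original exponents `e x j`.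
theorem pdList_laurentSum (A : Finset ι) (d : ι → ℂ) (e : ι → Fin s → ℤ) (β : Fin s → ℕ)
    {l : List (Fin s)} (hl : l.Nodup) :
    Set.EqOn (pdList β l (laurentSum A d e))
      (laurentSum A
        (fun x => d x * (l.map fun j => (descPochhammer ℂ (β j)).eval (e x j : ℂ)).prod)
        (fun x => e x - fun i => if i ∈ l then (β i : ℤ) else 0)) (torus s) := by
  induction l with
  | nil => intro z _; simp [pdList, ← Pi.zero_def]
  | cons j l ih =>
    intro z hz
    obtain ⟨hjl, hl⟩ := List.nodup_cons.1 hl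
    have hexp : ∀ x, (e x - fun i => if i ∈ l then (β i : ℤ) else 0) - Pi.single j (β j : ℤ) =
        e x - fun i => if i ∈ j :: l then (β i : ℤ) else 0 := by
      intro x
      funext i
      by_cases hij : i = j
      · subst hij; simp [hjl]
      · simp [hij]
    change (pd j)^[β j] (pdList β l _) z = _
    rw [iterate_pd_congr (ih hl) j (β j) hz, iterate_pd_laurentSum _ _ _ j (β j) hz]
    simp only [laurentSum, hexp, Pi.sub_apply, if_neg hjl, sub_zero, List.map_cons,
      List.prod_cons]
    exact Finset.sum_congr rfl fun x _ => by ring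

theorem pdMulti_laurentSum (A : Finset ι) (d : ι → ℂ) (e : ι → Fin s → ℤ) (β : Fin s → ℕ) :
    Set.EqOn (pdMulti β (laurentSum A d e))
      (laurentSum A (fun x => d x * ∏ j, (descPochhammer ℂ (β j)).eval (e x j : ℂ))
        (fun x => e x - fun j => (β j : ℤ))) (torus s) := by
  intro z hz
  rw [pdMulti_eq_pdList, pdList_laurentSum A d e β (List.nodup_finRange s) hz]
  simp [Fin.prod_univ_def]

theorem pdMulti_laurentSum_eq_zero_iff (A : Finset ι) (d : ι → ℂ) (e : ι → Fin s → ℤ)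
    (β : Fin s → ℕ) {z : Fin s → ℂ} (hz : z ∈ torus s) :
    pdMulti β (laurentSum A d e) z = 0 ↔
      weightedEval A (fun x => d x * eSeq z (e x)) (fun x j => (e x j : ℂ))
        (mvDescPochhammer β) = 0 := by
  have hshift : ∀ x,
      eSeq z (e x) = eSeq z (e x - fun j => (β j : ℤ)) * eSeq z fun j => (β j : ℤ) :=
    fun x => by rw [← eSeq_add hz, sub_add_cancel]
  rw [pdMulti_laurentSum A d e β hz, weightedEval_apply,
    ← mul_eq_zero_iff_right (eSeq_ne_zero hz _), laurentSum, Finset.sum_mul]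
  simp only [hshift, eval_mvDescPochhammer]
  exact Iff.of_eq (congrArg (· = (0 : ℂ)) (Finset.sum_congr rfl fun x _ => by ring))

end LaurentSum

section Symbol

variable {s : ℕ}

theorem astar_eq_laurentSum (c : (Fin s → ℤ) →₀ ℂ) : astar c = laurentSum c.support c id := rfl

theorem astar_comp_powXi_eqOn (c : (Fin s → ℤ) →₀ ℂ) (Ξ : Matrix (Fin s) (Fin s) ℤ) :
    Set.EqOn (fun z => astar c (powXi Ξ z)) (laurentSum c.support c (Ξ *ᵥ ·)) (torus s) :=
  fun _ hz => Finset.sum_congr rfl fun α _ => congrArg (c α * ·) (eSeq_powXi Ξ hz α)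

theorem pdMulti_astar_eq_zero_iff (c : (Fin s → ℤ) →₀ ℂ) (β : Fin s → ℕ) {w : Fin s → ℂ}
    (hw : w ∈ torus s) :
    pdMulti β (astar c) w = 0 ↔
      weightedEval c.support (fun α => c α * eSeq w α) (fun α j => (α j : ℂ))
        (mvDescPochhammer β) = 0 := by
  rw [astar_eq_laurentSum]
  exact pdMulti_laurentSum_eq_zero_iff _ _ _ β hw

theorem pdMulti_astar_comp_powXi_eq_zero_iff (c : (Fin s → ℤ) →₀ ℂ)
    (Ξ : Matrix (Fin s) (Fin s) ℤ) (β : Fin s → ℕ) {z : Fin s → ℂ} (hz : z ∈ torus s) :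
    pdMulti β (fun z => astar c (powXi Ξ z)) z = 0 ↔
      weightedEval c.support (fun α => c α * eSeq (powXi Ξ z) α) (fun α j => (α j : ℂ))
        (bind₁ (Ξ.map (Int.cast : ℤ → ℂ)).toMvPolynomial (mvDescPochhammer β)) = 0 := by
  have hweights : (fun α => c α * eSeq z (Ξ *ᵥ α)) = fun α => c α * eSeq (powXi Ξ z) α := by
    simp only [eSeq_powXi Ξ hz]
  have hpoints : (fun α j => ((Ξ *ᵥ α) j : ℂ)) =
      fun α => Ξ.map (Int.cast : ℤ → ℂ) *ᵥ fun j => (α j : ℂ) :=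
    funext fun α => funext fun j => (Int.castRingHom ℂ).map_mulVec Ξ α j
  rw [pdMulti_congr (astar_comp_powXi_eqOn c Ξ) β hz, pdMulti_laurentSum_eq_zero_iff _ _ _ β hz,
    weightedEval_bind₁_toMvPolynomial, hweights, hpoints]

end Symbol

/-- for a finite Laurent sum `f` and `g(z) = f(z^Ξ)`, all partial
derivatives of `g` of total order `≤ k` vanish at `z₀ ∈ (ℂ∖{0})^s` if and only if all
partial derivatives of `f` of total order `≤ k` vanish at `z₀^Ξ`. -/
theorem stmt17 {s : ℕ} (c : (Fin s → ℤ) →₀ ℂ) (Ξ : Matrix (Fin s) (Fin s) ℤ)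
    (hdet : Ξ.det ≠ 0) (k : ℕ) (z₀ : Fin s → ℂ) (hz : ∀ j, z₀ j ≠ 0) :
    (∀ β : Fin s → ℕ, (∑ j, β j) ≤ k →
        pdMulti β (fun z => astar c (powXi Ξ z)) z₀ = 0) ↔
      ∀ β : Fin s → ℕ, (∑ j, β j) ≤ k → pdMulti β (astar c) (powXi Ξ z₀) = 0 := by
  have hΞ : IsUnit (Ξ.map (Int.cast : ℤ → ℂ)).det := by
    rw [show (Ξ.map (Int.cast : ℤ → ℂ)).det = (Ξ.det : ℂ) from
      ((Int.castRingHom ℂ).map_det Ξ).symm]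
    exact isUnit_iff_ne_zero.2 (Int.cast_ne_zero.2 hdet)
  simp only [pdMulti_astar_comp_powXi_eq_zero_iff c Ξ _ hz,
    pdMulti_astar_eq_zero_iff c _ (powXi_mem_torus Ξ hz)]
  set T := weightedEval c.support (fun α => c α * eSeq (powXi Ξ z₀) α) (fun α j => (α j : ℂ))
  set L := (bind₁ (Ξ.map (Int.cast : ℤ → ℂ)).toMvPolynomial).toLinearMap
  calc (∀ β : Fin s → ℕ, ∑ j, β j ≤ k → T (L (mvDescPochhammer β)) = 0)
      ↔ ∀ P : MvPolynomial (Fin s) ℂ, P.totalDegree ≤ k → T (L P) = 0 :=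
        forall_mvDescPochhammer_eq_zero_iff (T ∘ₗ L) k
    _ ↔ ∀ P : MvPolynomial (Fin s) ℂ, P.totalDegree ≤ k → T P = 0 :=
        forall_bind₁_toMvPolynomial_eq_zero_iff T hΞ k
    _ ↔ ∀ β : Fin s → ℕ, ∑ j, β j ≤ k → T (mvDescPochhammer β) = 0 :=
        (forall_mvDescPochhammer_eq_zero_iff T k).symm
end
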